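/- arXiv:math/9908106 — 2 statements merged into one kernel-verified Lean document; each statement's English description precedes it below -/
import Mathlib

section
/- Let A be a Noetherian ring, I an ideal, and Z ⊆ W closed subsets of Spec(A). Then (I¬Z)¬W = I¬W, where for an ideal J and closed set Y, J¬Y denotes the intersection of the primary components of J whose varieties are not contained in Y. -/
open PrimeSpectrum
open PrimeSpectrum

def gapMonoid {A : Type*} [CommRing A] (I : Ideal A) (W : Set (PrimeSpectrum A)) :
    Submonoid A where
  carrier := {s : A | ∀ p ∈ associatedPrimes A (A ⧸ I),
      ¬ PrimeSpectrum.zeroLocus (p : Set A) ⊆ W → s ∉ p}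
  one_mem' := by
    intro p hp _ h1
    exact hp.isPrime.ne_top ((Ideal.eq_top_iff_one p).mpr h1)
  mul_mem' := by
    intro a b ha hb p hp hW hab
    rcases hp.isPrime.mem_or_mem hab with h | h
    · exact ha p hp hW h
    · exact hb p hp hW h

def gapIdeal {A : Type*} [CommRing A] (I : Ideal A) (W : Set (PrimeSpectrum A)) :
    Ideal A :=
  (I.map (algebraMap A (Localization (gapMonoid I W)))).comap
    (algebraMap A (Localization (gapMonoid I W)))

lemma mem_gapMonoid {A : Type*} [CommRing A] {I : Ideal A} {W : Set (PrimeSpectrum A)} {s : A} :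
    s ∈ gapMonoid I W ↔ ∀ p ∈ associatedPrimes A (A ⧸ I),
      ¬ PrimeSpectrum.zeroLocus (p : Set A) ⊆ W → s ∉ p := Iff.rfl

lemma mem_gapIdeal_iff {A : Type*} [CommRing A] {I : Ideal A} {W : Set (PrimeSpectrum A)}
    {x : A} : x ∈ gapIdeal I W ↔ ∃ s ∈ gapMonoid I W, s * x ∈ I := by
  rw [gapIdeal, Ideal.mem_comap, IsLocalization.mem_map_algebraMap_iff (gapMonoid I W)]
  constructor
  · rintro ⟨⟨⟨a, ha⟩, s⟩, h⟩
    rw [← map_mul, IsLocalization.eq_iff_exists (gapMonoid I W)] at h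
    obtain ⟨c, hc⟩ := h
    refine ⟨c * s, mul_mem c.2 s.2, ?_⟩
    have : (c : A) * (x * s) = c * a := hc
    have h2 : (c : A) * s * x = (c : A) * a := by rw [← this]; ring
    rw [h2]; exact I.mul_mem_left _ ha
  · rintro ⟨s, hs, hsx⟩
    exact ⟨⟨⟨s * x, hsx⟩, ⟨s, hs⟩⟩, by simp [← map_mul]; ring_nf⟩

lemma le_gapIdeal {A : Type*} [CommRing A] (I : Ideal A) (W : Set (PrimeSpectrum A)) :
    I ≤ gapIdeal I W :=
  fun x hx => mem_gapIdeal_iff.mpr ⟨1, one_mem _, by simpa⟩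

lemma smul_mk {A : Type*} [CommRing A] (J : Ideal A) (a x : A) :
    a • (Ideal.Quotient.mk J x) = Ideal.Quotient.mk J (a * x) := rfl

lemma isAssociatedPrime_quot_gapIdeal_iff {A : Type*} [CommRing A] [IsNoetherianRing A]
    (I : Ideal A) (Z : Set (PrimeSpectrum A)) (p : Ideal A) :
    IsAssociatedPrime p (A ⧸ gapIdeal I Z) ↔
      IsAssociatedPrime p (A ⧸ I) ∧ ∀ t ∈ gapMonoid I Z, t ∉ p := by
  classical
  set J := gapIdeal I Z with hJ
  set T := gapMonoid I Z with hT
  constructor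
  · rintro hpa
    obtain ⟨hp, x', hx'⟩ := isAssociatedPrime_iff.mp hpa
    obtain ⟨x, rfl⟩ := Ideal.Quotient.mk_surjective x'
    have hmem : ∀ a : A, a ∈ p ↔ a * x ∈ J := by
      intro a
      rw [hx', Submodule.mem_colon_singleton, Submodule.mem_bot, smul_mk,
        Ideal.Quotient.eq_zero_iff_mem]
    have hdisj : ∀ t ∈ T, t ∉ p := by
      intro t ht htp
      have hx1 : t * x ∈ J := (hmem t).mp htp
      obtain ⟨t', ht', ht'x⟩ := mem_gapIdeal_iff.mp hx1
      have : (1 : A) ∈ p := by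
        rw [hmem]
        rw [one_mul]
        exact mem_gapIdeal_iff.mpr ⟨t' * t, mul_mem ht' ht, by rwa [mul_assoc]⟩
      exact hp.ne_top ((Ideal.eq_top_iff_one p).mpr this)
    refine ⟨?_, hdisj⟩
    obtain ⟨s, hs⟩ := IsNoetherian.noetherian p
    have hchoice : ∀ a : {a // a ∈ s}, ∃ t, t ∈ T ∧ t * ((a : A) * x) ∈ I := by
      rintro ⟨a, ha⟩
      have hap : a ∈ p := by
        have hsp : Ideal.span (s : Set A) = p := hs
        rw [← hsp]; exact Ideal.subset_span ha
      obtain ⟨t, ht, htx⟩ := mem_gapIdeal_iff.mp ((hmem a).mp hap)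
      exact ⟨t, ht, htx⟩
    choose t htT htI using hchoice
    set c : A := ∏ a ∈ s.attach, t a with hc
    have hcT : c ∈ T := Submonoid.prod_mem _ (fun a _ => htT a)
    refine isAssociatedPrime_iff.mpr ⟨hp, Ideal.Quotient.mk I (c * x), ?_⟩
    ext a
    rw [Submodule.mem_colon_singleton, Submodule.mem_bot, smul_mk, Ideal.Quotient.eq_zero_iff_mem]
    constructor
    · intro hap
      have hle : Ideal.span (s : Set A) ≤ I.colon (Ideal.span {c * x}) := by
        rw [Ideal.span_le]
        intro b hb
        rw [SetLike.mem_coe, Ideal.mem_colon_span_singleton]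
        have hmem2 : (⟨b, hb⟩ : {a // a ∈ s}) ∈ s.attach := Finset.mem_attach _ _
        have hcsplit : t ⟨b, hb⟩ * ∏ a ∈ s.attach.erase ⟨b, hb⟩, t a = c :=
          Finset.mul_prod_erase _ _ hmem2
        have h1 : (∏ a ∈ s.attach.erase ⟨b, hb⟩, t a) * (t ⟨b, hb⟩ * (b * x)) ∈ I :=
          I.mul_mem_left _ (htI ⟨b, hb⟩)
        have h2 : b * (c * x) = (∏ a ∈ s.attach.erase ⟨b, hb⟩, t a) * (t ⟨b, hb⟩ * (b * x)) := by
          rw [← hcsplit]; ring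
        rwa [h2]
      have hsp : Ideal.span (s : Set A) = p := hs
      have := hle (by rw [hsp]; exact hap)
      rwa [Ideal.mem_colon_span_singleton] at this
    · intro haI
      have : a * c ∈ p := by
        rw [hmem]
        refine le_gapIdeal I Z ?_
        have h2 : a * c * x = a * (c * x) := by ring
        rwa [h2]
      rcases hp.mem_or_mem this with h | h
      · exact h
      · exact absurd h (hdisj c hcT)
  · rintro ⟨hpa, hdisj⟩
    obtain ⟨hp, x', hx'⟩ := isAssociatedPrime_iff.mp hpa
    obtain ⟨x, rfl⟩ := Ideal.Quotient.mk_surjective x'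
    have hmem : ∀ a : A, a ∈ p ↔ a * x ∈ I := by
      intro a
      rw [hx', Submodule.mem_colon_singleton, Submodule.mem_bot, smul_mk,
        Ideal.Quotient.eq_zero_iff_mem]
    refine isAssociatedPrime_iff.mpr ⟨hp, Ideal.Quotient.mk J x, ?_⟩
    ext a
    rw [Submodule.mem_colon_singleton, Submodule.mem_bot, smul_mk, Ideal.Quotient.eq_zero_iff_mem,
      mem_gapIdeal_iff]
    constructor
    · intro hap
      exact ⟨1, one_mem _, by rw [one_mul]; exact (hmem a).mp hap⟩
    · rintro ⟨u, hu, hux⟩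
      have : u * a ∈ p := by rw [hmem, mul_assoc]; exact hux
      rcases hp.mem_or_mem this with h | h
      · exact absurd h (hdisj u hu)
      · exact h

/-- Lemma 1.3.i: `(I ¬ Z) ¬ W = I ¬ W` for closed sets `Z ⊆ W`. -/
theorem gapIdeal_gapIdeal {A : Type*} [CommRing A] [IsNoetherianRing A]
    (I : Ideal A) (Z W : Set (PrimeSpectrum A))
    (hZ : IsClosed Z) (hW : IsClosed W) (hZW : Z ⊆ W) :
    gapIdeal (gapIdeal I Z) W = gapIdeal I W := by
  have hmon : gapMonoid (gapIdeal I Z) W = gapMonoid I W := by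
    ext s
    rw [mem_gapMonoid, mem_gapMonoid]
    constructor
    · intro hs p hp hpW
      refine hs p ?_ hpW
      rw [AssociatedPrimes.mem_iff, isAssociatedPrime_quot_gapIdeal_iff]
      exact ⟨hp, fun t ht => ht p hp (fun h => hpW (h.trans hZW))⟩
    · intro hs p hp hpW
      rw [AssociatedPrimes.mem_iff, isAssociatedPrime_quot_gapIdeal_iff] at hp
      exact hs p hp.1 hpW
  have hTS : ∀ t ∈ gapMonoid I Z, t ∈ gapMonoid I W :=
    fun t ht p hp hpW => ht p hp (fun h => hpW (h.trans hZW))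
  ext x
  rw [mem_gapIdeal_iff, mem_gapIdeal_iff]
  constructor
  · rintro ⟨s, hs, hsx⟩
    rw [hmon] at hs
    obtain ⟨u, hu, hux⟩ := mem_gapIdeal_iff.mp hsx
    exact ⟨u * s, mul_mem (hTS u hu) hs, by rwa [mul_assoc]⟩
  · rintro ⟨s, hs, hsx⟩
    rw [← hmon] at hs
    exact ⟨s, hs, le_gapIdeal I Z hsx⟩
end

section
/- Let X and Y be topological spaces equipped, and define W ⊆ X × Y to be IPZ-open if and only if π_X(W) is open in the pseudo-Zariski topology on X and, for every x ∈ π_X(W), the slice {y ∈ Y : (x,y) ∈ W} is open in the pseudo-Zariski topology on Y. Then the collection of IPZ-open sets is a topology on X × Y. -/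
/-- A set is pseudo-Zariski open if it is empty, or open and dense. -/
def pZOpen (Z : Type*) [TopologicalSpace Z] (U : Set Z) : Prop :=
  U = ∅ ∨ (IsOpen U ∧ Dense U)

/-- `W ⊆ X × Y` is IPZ-open iff its projection to `X` is pseudo-Zariski open and
every slice over a point of the projection is pseudo-Zariski open in `Y`. -/
def IPZOpen (X Y : Type*) [TopologicalSpace X] [TopologicalSpace Y]
    (W : Set (X × Y)) : Prop :=
  pZOpen X (Prod.fst '' W) ∧ ∀ x ∈ Prod.fst '' W, pZOpen Y {y : Y | (x, y) ∈ W}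

/-!
Slices commute with unions and intersections, and a point lies in `π_X(W)` exactly when its
slice is nonempty. So everything reduces to the pseudo-Zariski topology being a topology, plus
one observation for intersections: two nonempty open dense sets meet, hence
`π_X(U ∩ V) = π_X(U) ∩ π_X(V)` whenever all slices of `U` and `V` are pseudo-Zariski open.
-/

open Set

section PseudoZariski

variable {Z : Type*} [TopologicalSpace Z] {U V : Set Z}

lemma pZOpen_empty : pZOpen Z ∅ := Or.inl rfl

lemma pZOpen_univ : pZOpen Z univ := Or.inr ⟨isOpen_univ, dense_univ⟩

lemma pZOpen.isOpen (h : pZOpen Z U) : IsOpen U := by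
  rcases h with rfl | h
  · exact isOpen_empty
  · exact h.1

lemma pZOpen.dense (h : pZOpen Z U) (hne : U.Nonempty) : Dense U :=
  (h.resolve_left hne.ne_empty).2

lemma pZOpen.inter (hU : pZOpen Z U) (hV : pZOpen Z V) : pZOpen Z (U ∩ V) := by
  rcases hU with rfl | ⟨hUo, hUd⟩
  · exact Or.inl (empty_inter V)
  rcases hV with rfl | ⟨hVo, hVd⟩
  · exact Or.inl (inter_empty U)
  exact Or.inr ⟨hUo.inter hVo, hUd.inter_of_isOpen_left hVd hUo⟩

lemma pZOpen.inter_nonempty_iff (hU : pZOpen Z U) (hV : pZOpen Z V) :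
    (U ∩ V).Nonempty ↔ U.Nonempty ∧ V.Nonempty := by
  refine ⟨fun h => ⟨h.mono inter_subset_left, h.mono inter_subset_right⟩, ?_⟩
  rintro ⟨⟨z, hz⟩, hVne⟩
  have : Nonempty Z := ⟨z⟩
  exact ((hU.dense ⟨z, hz⟩).inter_of_isOpen_left (hV.dense hVne) hU.isOpen).nonempty

lemma pZOpen_iUnion {ι : Sort*} {f : ι → Set Z} (h : ∀ i, pZOpen Z (f i)) :
    pZOpen Z (⋃ i, f i) := by
  by_cases hne : ∃ i, (f i).Nonempty
  · obtain ⟨i, hi⟩ := hne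
    exact Or.inr ⟨isOpen_iUnion fun j => (h j).isOpen, ((h i).dense hi).mono (subset_iUnion f i)⟩
  · exact Or.inl (iUnion_eq_empty.2 fun i => not_nonempty_iff_eq_empty.1 fun hi => hne ⟨i, hi⟩)

end PseudoZariski

lemma mem_fst_image_iff_nonempty_slice {X Y : Type*} {W : Set (X × Y)} {x : X} :
    x ∈ Prod.fst '' W ↔ (Prod.mk x ⁻¹' W).Nonempty := by
  constructor
  · rintro ⟨⟨x, y⟩, hW, rfl⟩
    exact ⟨y, hW⟩
  · rintro ⟨y, hW⟩
    exact ⟨(x, y), hW, rfl⟩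

lemma fst_image_inter_of_pZOpen_slices {X Y : Type*} [TopologicalSpace Y] {U V : Set (X × Y)}
    (hU : ∀ x, pZOpen Y (Prod.mk x ⁻¹' U)) (hV : ∀ x, pZOpen Y (Prod.mk x ⁻¹' V)) :
    Prod.fst '' (U ∩ V) = Prod.fst '' U ∩ Prod.fst '' V := by
  ext x
  simp only [mem_inter_iff, mem_fst_image_iff_nonempty_slice, preimage_inter]
  exact (hU x).inter_nonempty_iff (hV x)

section IPZ

variable {X Y : Type*} [TopologicalSpace X] [TopologicalSpace Y] {W : Set (X × Y)}

lemma ipzOpen_iff_forall_slice :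
    IPZOpen X Y W ↔ pZOpen X (Prod.fst '' W) ∧ ∀ x, pZOpen Y (Prod.mk x ⁻¹' W) := by
  refine and_congr_right fun _ => ⟨fun h x => ?_, fun h x _ => h x⟩
  by_cases hx : x ∈ Prod.fst '' W
  · exact h x hx
  · exact Or.inl (not_nonempty_iff_eq_empty.1 (mt mem_fst_image_iff_nonempty_slice.2 hx))

lemma ipzOpen_univ : IPZOpen X Y univ := by
  refine ipzOpen_iff_forall_slice.2 ⟨?_, fun _ => pZOpen_univ⟩
  rcases isEmpty_or_nonempty Y with hY | hY
  · rw [univ_eq_empty_iff.2 inferInstance, image_empty]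
    exact pZOpen_empty
  · rw [image_univ_of_surjective Prod.fst_surjective]
    exact pZOpen_univ

lemma IPZOpen.inter {U V : Set (X × Y)} (hU : IPZOpen X Y U) (hV : IPZOpen X Y V) :
    IPZOpen X Y (U ∩ V) := by
  rw [ipzOpen_iff_forall_slice] at hU hV ⊢
  rw [fst_image_inter_of_pZOpen_slices hU.2 hV.2]
  exact ⟨hU.1.inter hV.1, fun x => (hU.2 x).inter (hV.2 x)⟩

lemma ipzOpen_sUnion {S : Set (Set (X × Y))} (hS : ∀ U ∈ S, IPZOpen X Y U) :
    IPZOpen X Y (⋃₀ S) := by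
  simp only [ipzOpen_iff_forall_slice] at hS ⊢
  rw [sUnion_eq_biUnion, image_iUnion₂]
  simp only [preimage_iUnion₂]
  exact ⟨pZOpen_iUnion fun U => pZOpen_iUnion fun hU => (hS U hU).1,
    fun x => pZOpen_iUnion fun U => pZOpen_iUnion fun hU => (hS U hU).2 x⟩

end IPZ

/-- Definition 2.10: the IPZ-open sets form a topology on `X × Y`. -/
theorem IPZ_isTopology (X Y : Type*) [TopologicalSpace X] [TopologicalSpace Y] :
    IPZOpen X Y Set.univ ∧
    (∀ U V : Set (X × Y), IPZOpen X Y U → IPZOpen X Y V → IPZOpen X Y (U ∩ V)) ∧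
    (∀ S : Set (Set (X × Y)), (∀ U ∈ S, IPZOpen X Y U) → IPZOpen X Y (⋃₀ S)) :=
  ⟨ipzOpen_univ, fun _ _ => IPZOpen.inter, fun _ => ipzOpen_sUnion⟩
end
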